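/- Let H and 𝒦 be separable complex Hilbert spaces, U : ℝ → U(H) a strongly continuous unitary representation, Λ the translation representation (Λ(t)Φ)(s) = Φ(s−t) on L²(ℝ;𝒦), W : H → L²(ℝ;𝒦) an isometry with W U(t) = Λ(t) W and WW*Λ(t) = Λ(t)WW* for all t, β > 0, and (ψ_n)_{n≥1} an orthonormal basis of 𝒦 (with ψ_n = 0 for n exceeding dim 𝒦 if 𝒦 is finite dimensional). For compact K ⊆ ℝ and n ∈ ℕ let Ψ_{K,n} ∈ L²(ℝ;𝒦) be Ψ_{K,n}(s) = Φ_K^{(β)}(s)·ψ_n, where Φ_K^{(β)}(s) = (2π)^{-1/2} ∫_K e^{-isξ} e^{-βξ/2} dξ, and define the weight φ_β : B(H)⁺ → [0,∞] by φ_β(x) := sup over compact K ⊆ ℝ and N ∈ ℕ of Σ_{n=1}^{N} ∫_ℝ ⟨W*Ψ_{K,n}, U(t) x U(t)* W*Ψ_{K,n}⟩ dt. Then φ_β is normal: for every norm-bounded monotone increasing net (x_α) of positive operators in B(H) with least upper bound x in the Loewner order, sup_α φ_β(x_α) = φ_β(x). -/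

import Mathlib

/-! `φ_β` is a supremum of finite sums of the functionals `x ↦ ∫ ⟪U(t)* v, x U(t)* v⟫ dt`, so it
suffices to pass monotone limits through each of these integrals. By Vigier's theorem the bounded
increasing net converges strongly to its least upper bound `x`. Because `H` is separable, strong
convergence can be realised along an increasing sequence taken from the net (convergence on a
countable dense set, spread to all of `H` by equicontinuity), and along that sequence the monotone
convergence theorem applies to every integral. -/

open MeasureTheory
open scoped ENNReal NNReal

local notation "⟪" x ", " y "⟫_ℂ" => @inner ℂ _ _ x y

noncomputable section

/-- `phiFn β A` is the function `Φ_A^{(β)}(s) = (2π)^{-1/2} ∫_A e^{-isξ} e^{-βξ/2} dξ`,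
the inverse Fourier transform of `χ_A(ξ) e^{-βξ/2}`. -/
def phiFn (β : ℝ) (A : Set ℝ) (s : ℝ) : ℂ :=
  (((Real.sqrt (2 * Real.pi))⁻¹ : ℝ) : ℂ) *
    ∫ ξ in A, Complex.exp (-(Complex.I * (s : ℂ) * (ξ : ℂ)) - ((β : ℂ) * (ξ : ℂ)) / 2)

/-- The weight `φ_β(x) = sup_{K,N} Σ_{n<N} ∫_ℝ ⟨W*Ψ_{K,n}, U(t) x U(t)* W*Ψ_{K,n}⟩ dt`,
expressed through the vectors `θ A n = W*Ψ_{A,n}`. -/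
def weightPhi {H : Type*} [NormedAddCommGroup H] [InnerProductSpace ℂ H] [CompleteSpace H]
    (U : ℝ → (H →L[ℂ] H)) (θ : Set ℝ → ℕ → H) (x : H →L[ℂ] H) : ℝ≥0∞ :=
  ⨆ (A : {A : Set ℝ // IsCompact A}) (N : ℕ), ∑ n ∈ Finset.range N,
    ∫⁻ t : ℝ, ENNReal.ofReal (⟪θ A.1 n, (U t * x * star (U t)) (θ A.1 n)⟫_ℂ).re

open Filter Topology

theorem Metric.cauchySeq_of_forall_ge_dist_lt {α ι : Type*} [PseudoMetricSpace α] [Preorder ι]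
    [IsDirected ι (· ≤ ·)] [Nonempty ι] {u : ι → α}
    (h : ∀ ε > 0, ∃ i, ∀ j ≥ i, dist (u j) (u i) < ε) : CauchySeq u := by
  refine Metric.cauchy_iff.2 ⟨map_neBot, fun ε hε => ?_⟩
  obtain ⟨i, hi⟩ := h (ε / 2) (half_pos hε)
  refine ⟨u '' Set.Ici i, image_mem_map (Ici_mem_atTop i), ?_⟩
  rintro _ ⟨j, hj, rfl⟩ _ ⟨k, hk, rfl⟩
  calc dist (u j) (u k) ≤ dist (u j) (u i) + dist (u k) (u i) := dist_triangle_right _ _ _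
    _ < ε / 2 + ε / 2 := add_lt_add (hi j hj) (hi k hk)
    _ = ε := add_halves ε

theorem exists_monotone_seq_ge {ι : Type*} [Preorder ι] [IsDirected ι (· ≤ ·)] (u : ℕ → ι) :
    ∃ j : ℕ → ι, Monotone j ∧ ∀ k, u k ≤ j k := by
  choose ub hub₁ hub₂ using fun a b : ι => exists_ge_ge a b
  let j : ℕ → ι := fun k => Nat.rec (u 0) (fun k jk => ub jk (u (k + 1))) k
  refine ⟨j, monotone_nat_of_le_succ fun k => hub₁ _ _, fun k => ?_⟩
  cases k with
  | zero => exact le_rfl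
  | succ k => exact hub₂ _ _

/-- Convergence on a countable dense set is a countably generated condition on the index, and
equicontinuity propagates convergence from a dense set to the whole space. -/
theorem exists_seq_tendsto_of_equicontinuous {ι X Y : Type*} [Preorder ι]
    [IsDirected ι (· ≤ ·)] [Nonempty ι] [TopologicalSpace X] [TopologicalSpace.SeparableSpace X]
    [PseudoMetricSpace Y] {f : ι → X → Y} {g : X → Y} (hf : Equicontinuous f)
    (hg : Continuous g) (h : ∀ x, Tendsto (f · x) atTop (𝓝 (g x))) :
    ∃ u : ℕ → ι, ∀ x, Tendsto (fun k => f (u k) x) atTop (𝓝 (g x)) := by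
  obtain ⟨D, hDc, hDd⟩ := TopologicalSpace.exists_countable_dense X
  have : Countable D := hDc.to_subtype
  let G : Filter ι := ⨅ d : D, comap (f · d) (𝓝 (g d))
  have hG : atTop ≤ G := le_iInf fun d => (h d).le_comap
  have : G.NeBot := .mono inferInstance hG
  obtain ⟨u, hu⟩ := exists_seq_tendsto G
  have hD : D ⊆ {x | Tendsto (fun k => f (u k) x) atTop (𝓝 (g x))} := fun d hd =>
    tendsto_comap_iff.1 (hu.mono_right (iInf_le (fun d : D => comap (f · d) (𝓝 (g d))) ⟨d, hd⟩))
  refine ⟨u, fun x => ?_⟩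
  have hclosed := (hf.comp u).isClosed_setOfPred_tendsto (l := atTop) hg
  exact hclosed.closure_subset_iff.2 hD (hDd.closure_eq ▸ Set.mem_univ x)

namespace ContinuousLinearMap

section RCLike

variable {𝕜 E ι : Type*} [RCLike 𝕜] [NormedAddCommGroup E] [InnerProductSpace 𝕜 E]

theorem reApplyInnerSelf_mono {S T : E →L[𝕜] E} (h : S ≤ T) (v : E) :
    S.reApplyInnerSelf v ≤ T.reApplyInnerSelf v := by
  have h' := ((le_def S T).1 h).2 v
  simpa only [reApplyInnerSelf_apply, sub_apply, inner_sub_left, map_sub, sub_nonneg] using h'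

theorem isPositive_of_tendsto {α : Type*} {l : Filter α} [l.NeBot] {S : α → E →L[𝕜] E}
    {T : E →L[𝕜] E} (hST : ∀ v, Tendsto (S · v) l (𝓝 (T v)))
    (hS : ∀ᶠ a in l, (S a).IsPositive) : T.IsPositive := by
  refine ⟨fun v w => ?_, fun v => ?_⟩
  · refine tendsto_nhds_unique ((hST v).inner tendsto_const_nhds) ?_
    exact (tendsto_const_nhds.inner (hST w)).congr' (hS.mono fun a ha => (ha.isSymmetric v w).symm)
  · exact ge_of_tendsto ((RCLike.continuous_re.tendsto _).comp ((hST v).inner tendsto_const_nhds))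
      (hS.mono fun a ha => ha.re_inner_nonneg_left v)

variable [Preorder ι] [IsDirected ι (· ≤ ·)] [Nonempty ι]

theorem isLUB_of_tendsto_apply {T : ι → E →L[𝕜] E} {y : E →L[𝕜] E} (hT : Monotone T)
    (hy : ∀ v, Tendsto (T · v) atTop (𝓝 (y v))) : IsLUB (Set.range T) y := by
  refine ⟨Set.forall_mem_range.2 fun i => ?_, fun z hz => ?_⟩
  · exact isPositive_of_tendsto (S := fun j => T j - T i) (fun v => (hy v).sub_const (T i v))
      ((eventually_ge_atTop i).mono fun j hj => hT hj)
  · exact isPositive_of_tendsto (S := fun j => z - T j) (fun v => (hy v).const_sub (z v))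
      (Eventually.of_forall fun j => hz ⟨j, rfl⟩)

end RCLike

variable {H ι : Type*} [NormedAddCommGroup H] [InnerProductSpace ℂ H] [CompleteSpace H]

theorem mul_self_le_norm_smul {T : H →L[ℂ] H} (hT : 0 ≤ T) : T * T ≤ ‖T‖ • T := by
  have h := CStarAlgebra.star_left_conjugate_le_norm_smul (a := CFC.sqrt T) (b := T)
  have hs : CFC.sqrt T * CFC.sqrt T = T := CFC.sqrt_mul_sqrt_self T hT
  rw [(CFC.sqrt_nonneg T).isSelfAdjoint.star_eq, hs] at h
  generalize CFC.sqrt T = s at h hs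
  subst hs
  simpa only [mul_assoc] using h

theorem norm_apply_sq_le_norm_mul_reApplyInnerSelf {T : H →L[ℂ] H} (hT : 0 ≤ T) (v : H) :
    ‖T v‖ ^ 2 ≤ ‖T‖ * T.reApplyInnerSelf v := by
  have h := reApplyInnerSelf_mono (mul_self_le_norm_smul hT) v
  have hsymm : ⟪(T * T) v, v⟫_ℂ = ⟪T v, T v⟫_ℂ := ((nonneg_iff_isPositive T).1 hT).isSymmetric _ _
  rw [reApplyInnerSelf_apply, reApplyInnerSelf_apply, hsymm, inner_self_eq_norm_sq, smul_apply,
    RCLike.real_smul_eq_coe_smul (K := ℂ), inner_smul_real_left] at h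
  simpa [reApplyInnerSelf_apply] using h

variable [Preorder ι] [IsDirected ι (· ≤ ·)] [Nonempty ι] {T : ι → H →L[ℂ] H} {C : ℝ}

theorem cauchySeq_apply_of_monotone (hT : Monotone T) (hC : ∀ i, ‖T i‖ ≤ C) (v : H) :
    CauchySeq (T · v) := by
  have hC₀ : 0 ≤ C := (norm_nonneg _).trans (hC (Classical.arbitrary ι))
  have hq : Monotone fun i => (T i).reApplyInnerSelf v :=
    fun i j h => reApplyInnerSelf_mono (hT h) v
  have hq_bdd : BddAbove (Set.range fun i => (T i).reApplyInnerSelf v) := by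
    refine ⟨C * ‖v‖ ^ 2, Set.forall_mem_range.2 fun i => ?_⟩
    calc (T i).reApplyInnerSelf v ≤ ‖T i v‖ * ‖v‖ :=
          (RCLike.re_le_norm _).trans (norm_inner_le_norm _ _)
      _ ≤ C * ‖v‖ * ‖v‖ := by gcongr; exact (T i).le_of_opNorm_le (hC i) v
      _ = C * ‖v‖ ^ 2 := by ring
  set L := ⨆ i, (T i).reApplyInnerSelf v
  have key : ∀ i j, i ≤ j →
      ‖T j v - T i v‖ ^ 2 ≤ (2 * C + 1) * (L - (T i).reApplyInnerSelf v) := by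
    intro i j hij
    have hij' : 0 ≤ T j - T i := sub_nonneg.2 (hT hij)
    have hnorm : ‖T j - T i‖ ≤ 2 * C + 1 := (norm_sub_le _ _).trans (by linarith [hC i, hC j])
    have hsub : (T j - T i).reApplyInnerSelf v
        = (T j).reApplyInnerSelf v - (T i).reApplyInnerSelf v := by
      simp [reApplyInnerSelf_apply, inner_sub_left]
    have hjL : (T j).reApplyInnerSelf v ≤ L := le_ciSup hq_bdd j
    calc ‖T j v - T i v‖ ^ 2 ≤ ‖T j - T i‖ * (T j - T i).reApplyInnerSelf v :=
          norm_apply_sq_le_norm_mul_reApplyInnerSelf hij' v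
      _ ≤ (2 * C + 1) * (L - (T i).reApplyInnerSelf v) :=
        mul_le_mul hnorm (by linarith) (((nonneg_iff_isPositive _).1 hij').2 v) (by linarith)
  refine Metric.cauchySeq_of_forall_ge_dist_lt fun ε hε => ?_
  have hδ : 0 < ε ^ 2 / (2 * C + 1) := by positivity
  obtain ⟨i, hi⟩ := ((tendsto_atTop_ciSup hq hq_bdd).eventually
    (lt_mem_nhds (sub_lt_self L hδ))).exists
  refine ⟨i, fun j hj => lt_of_pow_lt_pow_left₀ 2 hε.le ?_⟩
  rw [dist_eq_norm]
  calc ‖T j v - T i v‖ ^ 2 ≤ (2 * C + 1) * (L - (T i).reApplyInnerSelf v) := key i j hj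
    _ < (2 * C + 1) * (ε ^ 2 / (2 * C + 1)) := by gcongr; linarith
    _ = ε ^ 2 := by field_simp

/-- Vigier's theorem. -/
theorem exists_tendsto_apply_of_monotone (hT : Monotone T) (hC : ∀ i, ‖T i‖ ≤ C) :
    ∃ y : H →L[ℂ] H, ∀ v, Tendsto (T · v) atTop (𝓝 (y v)) := by
  choose g hg using fun v => cauchySeq_tendsto_of_complete (cauchySeq_apply_of_monotone hT hC v)
  let y := linearMapOfTendsto g (fun i => (T i : H →ₗ[ℂ] H)) (tendsto_pi_nhds.2 hg)
  refine ⟨y.mkContinuous C fun v => ?_, hg⟩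
  exact le_of_tendsto (hg v).norm (.of_forall fun i => (T i).le_of_opNorm_le (hC i) v)

theorem tendsto_apply_of_isLUB (hT : Monotone T) (hC : ∀ i, ‖T i‖ ≤ C) {x : H →L[ℂ] H}
    (hx : IsLUB (Set.range T) x) (v : H) : Tendsto (T · v) atTop (𝓝 (x v)) := by
  obtain ⟨y, hy⟩ := exists_tendsto_apply_of_monotone hT hC
  rw [← (isLUB_of_tendsto_apply hT hy).unique hx]
  exact hy v

theorem exists_monotone_seq_tendsto_reApplyInnerSelf [TopologicalSpace.SeparableSpace H]
    (hT : Monotone T) (hC : ∀ i, ‖T i‖ ≤ C) {x : H →L[ℂ] H} (hx : IsLUB (Set.range T) x) :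
    ∃ j : ℕ → ι, Monotone j ∧
      ∀ v, Tendsto (fun k => (T (j k)).reApplyInnerSelf v) atTop (𝓝 (x.reApplyInnerSelf v)) := by
  have hequi : Equicontinuous fun i => ⇑(T i) :=
    (LipschitzWith.uniformEquicontinuous _ C.toNNReal fun i => (T i).lipschitz.weaken
      (norm_toNNReal (a := T i) ▸ Real.toNNReal_le_toNNReal (hC i))).equicontinuous
  obtain ⟨u, hu⟩ :=
    exists_seq_tendsto_of_equicontinuous hequi x.continuous (tendsto_apply_of_isLUB hT hC hx)
  obtain ⟨j, hj, huj⟩ := exists_monotone_seq_ge u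
  refine ⟨j, hj, fun v => tendsto_of_tendsto_of_tendsto_of_le_of_le ?_ tendsto_const_nhds
    (fun k => reApplyInnerSelf_mono (hT (huj k)) v)
    (fun k => reApplyInnerSelf_mono (hx.1 ⟨j k, rfl⟩) v)⟩
  simp only [reApplyInnerSelf_apply]
  exact (RCLike.continuous_re.tendsto _).comp ((hu v).inner tendsto_const_nhds)

end ContinuousLinearMap

section Weight

open ContinuousLinearMap

variable {H : Type*} [NormedAddCommGroup H] [InnerProductSpace ℂ H] [CompleteSpace H]
  {U : ℝ → H →L[ℂ] H}

theorem continuous_star_apply_of_unitary (hU0 : U 0 = 1) (hUadd : ∀ s t, U (s + t) = U s * U t)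
    (hUuni : ∀ t, U t ∈ unitary (H →L[ℂ] H)) (hUcont : ∀ v, Continuous fun t => U t v) (v : H) :
    Continuous fun t => star (U t) v := by
  have hstar : ∀ t, star (U t) = U (-t) := fun t => by
    rw [← mul_one (star (U t)), ← hU0, ← add_neg_cancel t, hUadd, ← mul_assoc,
      Unitary.star_mul_self_of_mem (hUuni t), one_mul]
  simp only [hstar]
  exact (hUcont v).comp continuous_neg

/-- The functional `x ↦ ∫ ⟪v, U(t) x U(t)* v⟫ dt`. -/
def orbitIntegral (U : ℝ → H →L[ℂ] H) (v : H) (x : H →L[ℂ] H) : ℝ≥0∞ :=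
  ∫⁻ t, ENNReal.ofReal (x.reApplyInnerSelf (star (U t) v))

theorem re_inner_conj_apply_self (V x : H →L[ℂ] H) (v : H) :
    (⟪v, (V * x * star V) v⟫_ℂ).re = x.reApplyInnerSelf (star V v) := by
  rw [star_eq_adjoint, mul_apply_eq_comp, mul_apply_eq_comp,
    ← adjoint_inner_left, reApplyInnerSelf_apply, inner_re_symm]
  rfl

theorem weightPhi_eq_iSup_orbitIntegral (θ : Set ℝ → ℕ → H) (x : H →L[ℂ] H) :
    weightPhi U θ x = ⨆ (A : {A : Set ℝ // IsCompact A}) (N : ℕ),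
      ∑ n ∈ Finset.range N, orbitIntegral U (θ A.1 n) x := by
  simp only [weightPhi, orbitIntegral, re_inner_conj_apply_self]

theorem orbitIntegral_mono (U : ℝ → H →L[ℂ] H) (v : H) : Monotone (orbitIntegral U v) :=
  fun _ _ h => lintegral_mono fun _ => ENNReal.ofReal_le_ofReal (reApplyInnerSelf_mono h _)

theorem weightPhi_mono (U : ℝ → H →L[ℂ] H) (θ : Set ℝ → ℕ → H) : Monotone (weightPhi U θ) := by
  intro S T h
  simp only [weightPhi_eq_iSup_orbitIntegral]
  gcongr
  exact orbitIntegral_mono U _ h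

variable {y : ℕ → H →L[ℂ] H} {x : H →L[ℂ] H}

theorem tendsto_orbitIntegral {v : H} (hU : Continuous fun t => star (U t) v) (hy : Monotone y)
    (hx : ∀ w, Tendsto (fun k => (y k).reApplyInnerSelf w) atTop (𝓝 (x.reApplyInnerSelf w))) :
    Tendsto (fun k => orbitIntegral U v (y k)) atTop (𝓝 (orbitIntegral U v x)) :=
  lintegral_tendsto_of_tendsto_of_monotone
    (fun k => (ENNReal.continuous_ofReal.comp
      ((y k).reApplyInnerSelf_continuous.comp hU)).measurable.aemeasurable)
    (ae_of_all _ fun _ _ _ hkl => ENNReal.ofReal_le_ofReal (reApplyInnerSelf_mono (hy hkl) _))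
    (ae_of_all _ fun _ => (ENNReal.continuous_ofReal.tendsto _).comp (hx _))

theorem weightPhi_eq_iSup_of_tendsto (hU : ∀ v, Continuous fun t => star (U t) v)
    (θ : Set ℝ → ℕ → H) (hy : Monotone y)
    (hx : ∀ w, Tendsto (fun k => (y k).reApplyInnerSelf w) atTop (𝓝 (x.reApplyInnerSelf w))) :
    weightPhi U θ x = ⨆ k, weightPhi U θ (y k) := by
  have hsum : ∀ A N, ∑ n ∈ Finset.range N, orbitIntegral U (θ A n) x
      = ⨆ k, ∑ n ∈ Finset.range N, orbitIntegral U (θ A n) (y k) := fun A N =>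
    tendsto_nhds_unique (tendsto_finsetSum _ fun n _ => tendsto_orbitIntegral (hU _) hy hx)
      (tendsto_atTop_iSup fun k l hkl =>
        Finset.sum_le_sum fun n _ => orbitIntegral_mono U _ (hy hkl))
  simp only [weightPhi_eq_iSup_orbitIntegral, hsum]
  exact (iSup_congr fun A => iSup_comm).trans iSup_comm

end Weight

theorem stmt14 {H : Type*}
    [NormedAddCommGroup H] [InnerProductSpace ℂ H] [CompleteSpace H] [SecondCountableTopology H]
    (U : ℝ → (H →L[ℂ] H))
    (hU0 : U 0 = 1) (hUadd : ∀ s t : ℝ, U (s + t) = U s * U t)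
    (hUuni : ∀ t : ℝ, U t ∈ unitary (H →L[ℂ] H))
    (hUcont : ∀ ψ : H, Continuous fun t : ℝ => U t ψ)
    (θ : Set ℝ → ℕ → H)
    (ι : Type*) [Preorder ι] [IsDirected ι (· ≤ ·)] [Nonempty ι]
    (xnet : ι → (H →L[ℂ] H)) (x : H →L[ℂ] H)
    (hxmono : ∀ i j, i ≤ j → (xnet j - xnet i).IsPositive)
    (hxbdd : ∃ C : ℝ, ∀ i, ‖xnet i‖ ≤ C)
    (hub : ∀ i, (x - xnet i).IsPositive)
    (hlub : ∀ y : H →L[ℂ] H, (∀ i, (y - xnet i).IsPositive) → (y - x).IsPositive) :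
    ⨆ i, weightPhi U θ (xnet i) = weightPhi U θ x := by
  obtain ⟨C, hC⟩ := hxbdd
  have hmono : Monotone xnet := fun i j hij => hxmono i j hij
  have hx : IsLUB (Set.range xnet) x :=
    ⟨Set.forall_mem_range.2 hub, fun y hy => hlub y fun i => hy ⟨i, rfl⟩⟩
  obtain ⟨j, hj, hjx⟩ :=
    ContinuousLinearMap.exists_monotone_seq_tendsto_reApplyInnerSelf hmono hC hx
  refine le_antisymm (iSup_le fun i => weightPhi_mono U θ (hub i)) ?_
  rw [weightPhi_eq_iSup_of_tendsto (continuous_star_apply_of_unitary hU0 hUadd hUuni hUcont) θ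
    (hmono.comp hj) hjx]
  exact iSup_le fun k => le_iSup (fun i => weightPhi U θ (xnet i)) (j k)

end
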